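/- For every natural number n ≥ 1 there exists a sequential vset-automaton An with 3n+1 states such that every disjunctive functional vset-automaton A′ with ⟦A′⟧(d) = ⟦An⟧(d) for all documents d has at least 2^n states. One may take An to be the chain with states q0,…,qn and, for each 1 ≤ i ≤ n, two intermediate states ri, si, with transitions q_{i−1} →^{xi⊢} ri, ri →^{σ} ri for every σ ∈ Σ, ri →^{⊣xi} qi, and q_{i−1} →^{yi⊢} si, si →^{σ} si for every σ ∈ Σ, si →^{⊣yi} qi, where qn is the unique accepting state and x1,…,xn,y1,…,yn are 2n distinct variables. -/

import Mathlib

namespace Spanners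

open scoped Classical

/-! ### Spans and mappings -/

abbrev Span := ℕ × ℕ

abbrev VMapping := ℕ → Option Span

def emptyMapping : VMapping := fun _ => none

def mapDom (μ : VMapping) : Set ℕ := {x | μ x ≠ none}

/-- Two mappings are compatible if they agree on every common variable. -/
def Compatible (μ1 μ2 : VMapping) : Prop :=
  ∀ x s1 s2, μ1 x = some s1 → μ2 x = some s2 → s1 = s2

def DisjointDom (μ1 μ2 : VMapping) : Prop :=
  ∀ x, μ1 x = none ∨ μ2 x = none

def munion (μ1 μ2 : VMapping) : VMapping := fun x =>
  match μ1 x with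
  | some s => some s
  | none => μ2 x

def minsert (x : ℕ) (s : Span) (μ : VMapping) : VMapping :=
  fun y => if y = x then some s else μ y

/-- Natural join of two sets of mappings. -/
def joinSet (S1 S2 : Set VMapping) : Set VMapping :=
  {μ | ∃ μ1 ∈ S1, ∃ μ2 ∈ S2, Compatible μ1 μ2 ∧ μ = munion μ1 μ2}

/-- Difference of two sets of mappings. -/
def diffSet (S1 S2 : Set VMapping) : Set VMapping :=
  {μ1 | μ1 ∈ S1 ∧ ∀ μ2 ∈ S2, ¬ Compatible μ1 μ2}

/-- Restriction of a mapping to a set of variables. -/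
noncomputable def restrictMap (μ : VMapping) (V : Set ℕ) : VMapping :=
  fun x => if x ∈ V then μ x else none

/-- Projection of a set of mappings to a set of variables. -/
def projSet (V : Set ℕ) (S : Set VMapping) : Set VMapping :=
  {μ' | ∃ μ ∈ S, μ' = restrictMap μ V}

/-! ### Regex formulas -/

inductive RGX (Sig : Type) where
  | empty : RGX Sig
  | eps : RGX Sig
  | letter : Sig → RGX Sig
  | union : RGX Sig → RGX Sig → RGX Sig
  | concat : RGX Sig → RGX Sig → RGX Sig
  | star : RGX Sig → RGX Sig
  | bind : ℕ → RGX Sig → RGX Sig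

variable {Sig : Type}

def RGX.vars : RGX Sig → Finset ℕ
  | .empty => ∅
  | .eps => ∅
  | .letter _ => ∅
  | .union a b => a.vars ∪ b.vars
  | .concat a b => a.vars ∪ b.vars
  | .star a => a.vars
  | .bind x a => insert x a.vars

def RGX.size : RGX Sig → ℕ
  | .empty => 1
  | .eps => 1
  | .letter _ => 1
  | .union a b => a.size + b.size + 1
  | .concat a b => a.size + b.size + 1
  | .star a => a.size + 1
  | .bind _ a => a.size + 1

/-- The schemaless semantics `⟨α⟩(d)`: `RMatch α d i j μ` means `([i,j⟩, μ) ∈ ⟨α⟩(d)`. -/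
inductive RMatch : RGX Sig → List Sig → ℕ → ℕ → VMapping → Prop where
  | eps {d : List Sig} {i : ℕ} (h1 : 1 ≤ i) (h2 : i ≤ d.length + 1) :
      RMatch .eps d i i emptyMapping
  | letter {d : List Sig} {i : ℕ} {σ : Sig} (h1 : 1 ≤ i) (h2 : d[i - 1]? = some σ) :
      RMatch (.letter σ) d i (i + 1) emptyMapping
  | unionL {a b : RGX Sig} {d : List Sig} {i j : ℕ} {μ : VMapping}
      (h : RMatch a d i j μ) : RMatch (.union a b) d i j μ
  | unionR {a b : RGX Sig} {d : List Sig} {i j : ℕ} {μ : VMapping}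
      (h : RMatch b d i j μ) : RMatch (.union a b) d i j μ
  | concat {a b : RGX Sig} {d : List Sig} {i k j : ℕ} {μ1 μ2 : VMapping}
      (h1 : RMatch a d i k μ1) (h2 : RMatch b d k j μ2) (hd : DisjointDom μ1 μ2) :
      RMatch (.concat a b) d i j (munion μ1 μ2)
  | bind {x : ℕ} {a : RGX Sig} {d : List Sig} {i j : ℕ} {μ : VMapping}
      (h : RMatch a d i j μ) (hx : μ x = none) :
      RMatch (.bind x a) d i j (minsert x (i, j) μ)
  | starNil {a : RGX Sig} {d : List Sig} {i : ℕ} (h1 : 1 ≤ i) (h2 : i ≤ d.length + 1) :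
      RMatch (.star a) d i i emptyMapping
  | starCons {a : RGX Sig} {d : List Sig} {i k j : ℕ} {μ1 μ2 : VMapping}
      (h1 : RMatch a d i k μ1) (h2 : RMatch (.star a) d k j μ2) (hd : DisjointDom μ1 μ2) :
      RMatch (.star a) d i j (munion μ1 μ2)

/-- `⟦α⟧(d)`: mappings extracted with the full span. -/
def rgxSem (α : RGX Sig) (d : List Sig) : Set VMapping :=
  {μ | RMatch α d 1 (d.length + 1) μ}

/-- Sequential regex formulas. -/
def RGX.Sequential : RGX Sig → Prop
  | .empty => True
  | .eps => True
  | .letter _ => True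
  | .union a b => a.Sequential ∧ b.Sequential
  | .concat a b => a.Sequential ∧ b.Sequential ∧ Disjoint a.vars b.vars
  | .star a => a.Sequential ∧ a.vars = ∅
  | .bind x a => a.Sequential ∧ x ∉ a.vars

/-- Variable-free words over the alphabet (built from ε, letters and concatenation). -/
inductive RGX.IsWord : RGX Sig → Prop where
  | eps : RGX.IsWord .eps
  | letter (σ : Sig) : RGX.IsWord (.letter σ)
  | concat {a b : RGX Sig} : a.IsWord → b.IsWord → RGX.IsWord (.concat a b)

/-- Functional for a set `V` of variables. -/
inductive FunctionalFor : RGX Sig → Finset ℕ → Prop where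
  | word {α : RGX Sig} (h : α.IsWord) : FunctionalFor α ∅
  | union {a b : RGX Sig} {V : Finset ℕ} (ha : FunctionalFor a V) (hb : FunctionalFor b V) :
      FunctionalFor (.union a b) V
  | concat {a b : RGX Sig} {V : Finset ℕ} (V1 : Finset ℕ) (hsub : V1 ⊆ V)
      (ha : FunctionalFor a V1) (hb : FunctionalFor b (V \ V1)) :
      FunctionalFor (.concat a b) V
  | star {a : RGX Sig} (h : FunctionalFor a ∅) : FunctionalFor (.star a) ∅
  | bind {x : ℕ} {a : RGX Sig} {V : Finset ℕ} (h : FunctionalFor a (V.erase x)) :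
      FunctionalFor (.bind x a) V

def RGX.Functional (α : RGX Sig) : Prop := FunctionalFor α α.vars

/-- Disjunctive functional regex formulas: finite disjunctions of functional regex formulas. -/
inductive DisjFunctional : RGX Sig → Prop where
  | base {γ : RGX Sig} (h : γ.Functional) : DisjFunctional γ
  | union {a b : RGX Sig} (ha : DisjFunctional a) (hb : DisjFunctional b) :
      DisjFunctional (.union a b)

/-- Number of disjuncts of a (disjunctive) regex formula. -/
def countDisjuncts : RGX Sig → ℕ
  | .union a b => countDisjuncts a + countDisjuncts b
  | _ => 1

/-- Disjunction-free regex formulas. -/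
def RGX.DisjFree : RGX Sig → Prop
  | .union _ _ => False
  | .concat a b => a.DisjFree ∧ b.DisjFree
  | .star a => a.DisjFree
  | .bind _ a => a.DisjFree
  | _ => True

/-- `γ` is synchronized for `x`: no subformula `γ1 ∨ γ2` contains `x`. -/
def RGX.SyncFor : RGX Sig → ℕ → Prop
  | .union a b, x => (x ∉ a.vars ∧ x ∉ b.vars) ∧ a.SyncFor x ∧ b.SyncFor x
  | .concat a b, x => a.SyncFor x ∧ b.SyncFor x
  | .star a, x => a.SyncFor x
  | .bind _ a, x => a.SyncFor x
  | _, _ => True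

/-- Concatenation of a list of regex formulas. -/
def concatList : List (RGX Sig) → RGX Sig
  | [] => .eps
  | [α] => α
  | α :: rest => .concat α (concatList rest)

/-- Disjunction of a list of regex formulas. -/
def disjList : List (RGX Sig) → RGX Sig
  | [] => .empty
  | [α] => α
  | α :: rest => .union α (disjList rest)

/-! ### vset-automata -/

inductive VLabel (Sig : Type) where
  | eps : VLabel Sig
  | letter : Sig → VLabel Sig
  | openv : ℕ → VLabel Sig
  | closev : ℕ → VLabel Sig
deriving DecidableEq

structure VA (Sig : Type) [DecidableEq Sig] where
  q0 : ℕ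
  F : Finset ℕ
  δ : Finset (ℕ × VLabel Sig × ℕ)

variable [DecidableEq Sig]

/-- The states of a VA: the initial state and all states mentioned in `F` or in transitions. -/
def statesOf (A : VA Sig) : Finset ℕ :=
  insert A.q0 (A.F ∪ A.δ.image (fun t => t.1) ∪ A.δ.image (fun t => t.2.2))

def labelVars : VLabel Sig → Finset ℕ
  | .openv x => {x}
  | .closev x => {x}
  | _ => ∅

/-- `Vars(A)`: the variables mentioned in the transitions of `A`. -/
def varsOf (A : VA Sig) : Finset ℕ := A.δ.biUnion (fun t => labelVars t.2.1)

/-- Total size of a VA: number of states plus number of transitions. -/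
def vaSize (A : VA Sig) : ℕ := (statesOf A).card + A.δ.card

/-- `A.PathFrom p ls q`: a path (run segment) from `p` to `q` with label sequence `ls`. -/
inductive VA.PathFrom (A : VA Sig) : ℕ → List (VLabel Sig) → ℕ → Prop where
  | nil (q : ℕ) : VA.PathFrom A q [] q
  | cons {p q r : ℕ} {l : VLabel Sig} {ls : List (VLabel Sig)}
      (h : (p, l, q) ∈ A.δ) (htail : VA.PathFrom A q ls r) : VA.PathFrom A p (l :: ls) r

/-- The word (document) read by a sequence of labels. -/
def readWord : List (VLabel Sig) → List Sig :=
  List.filterMap fun l => match l with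
    | VLabel.letter σ => some σ
    | _ => none

def isLetterL : VLabel Sig → Bool
  | .letter _ => true
  | _ => false

/-- The current position in the document just before executing the `k`-th label. -/
def posAt (ls : List (VLabel Sig)) (k : ℕ) : ℕ := 1 + (ls.take k).countP isLetterL

/-- Validity of a run, given by its label sequence. -/
def ValidLabels (ls : List (VLabel Sig)) : Prop :=
  ∀ x : ℕ,
    ls.count (VLabel.openv x) ≤ 1 ∧
    ls.count (VLabel.closev x) ≤ 1 ∧
    ((VLabel.openv x) ∈ ls ↔ (VLabel.closev x) ∈ ls) ∧
    ∀ i j : ℕ, ls[i]? = some (VLabel.openv x) → ls[j]? = some (VLabel.closev x) →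
      posAt ls i ≤ posAt ls j

/-- The mapping `μ_ρ` extracted from a (valid accepting) run with label sequence `ls`. -/
def runMapping (ls : List (VLabel Sig)) : VMapping := fun x =>
  if (VLabel.openv x) ∈ ls then
    some (posAt ls (ls.idxOf (VLabel.openv x)), posAt ls (ls.idxOf (VLabel.closev x)))
  else none

/-- `ls` is the label sequence of an accepting run of `A`. -/
def AcceptsWith (A : VA Sig) (ls : List (VLabel Sig)) : Prop :=
  ∃ qf, VA.PathFrom A A.q0 ls qf ∧ qf ∈ A.F

/-- `⟦A⟧(d)`. -/
def vaSem (A : VA Sig) (d : List Sig) : Set VMapping :=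
  {μ | ∃ ls, AcceptsWith A ls ∧ readWord ls = d ∧ ValidLabels ls ∧ μ = runMapping ls}

/-- A VA is sequential if all of its accepting runs are valid. -/
def VA.Sequential (A : VA Sig) : Prop := ∀ ls, AcceptsWith A ls → ValidLabels ls

/-- A run from the initial state to `q` that is a prefix of an accepting run. -/
def PrefixRun (A : VA Sig) (ls : List (VLabel Sig)) (q : ℕ) : Prop :=
  VA.PathFrom A A.q0 ls q ∧ ∃ ls' qf, VA.PathFrom A q ls' qf ∧ qf ∈ A.F

/-- `A` is semi-functional for the variable `x`: no state has extended configuration `d`. -/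
def SemiFunctionalFor (A : VA Sig) (x : ℕ) : Prop :=
  ¬ ∃ q ls1 ls2, PrefixRun A ls1 q ∧ PrefixRun A ls2 q ∧
      (VLabel.closev x) ∈ ls1 ∧ (VLabel.openv x) ∉ ls2

def SemiFunctionalForSet (A : VA Sig) (X : Finset ℕ) : Prop :=
  ∀ x ∈ X, SemiFunctionalFor A x

/-- Functional VA: sequential, and every accepting run opens and closes every variable. -/
def FunctionalVA (A : VA Sig) : Prop :=
  A.Sequential ∧ ∀ ls, AcceptsWith A ls → ∀ x ∈ varsOf A,
    (VLabel.openv x) ∈ ls ∧ (VLabel.closev x) ∈ ls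

/-- `l` has a unique target state in `A`. -/
def UniqueTarget (A : VA Sig) (l : VLabel Sig) : Prop :=
  ∃ qt : ℕ, ∀ p q : ℕ, (p, l, q) ∈ A.δ → q = qt

/-- `A` is synchronized for the variable `x`. -/
def SyncForVA (A : VA Sig) (x : ℕ) : Prop :=
  UniqueTarget A (VLabel.openv x) ∧ UniqueTarget A (VLabel.closev x) ∧
    ((∀ ls, AcceptsWith A ls → (VLabel.openv x) ∈ ls ∧ (VLabel.closev x) ∈ ls) ∨
     (∀ ls, AcceptsWith A ls → (VLabel.openv x) ∉ ls ∧ (VLabel.closev x) ∉ ls))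

/-- `A` is the disjunctive functional VA with functional components `parts`. -/
def DisjFunctionalVAWith (A : VA Sig) (parts : List (VA Sig)) : Prop :=
  (∀ B ∈ parts, FunctionalVA B) ∧
  (parts.Pairwise fun B C => Disjoint (statesOf B) (statesOf C)) ∧
  (∀ B ∈ parts, A.q0 ∉ statesOf B) ∧
  A.F = parts.foldr (fun B s => B.F ∪ s) (∅ : Finset ℕ) ∧
  A.δ = (parts.map (fun B => (A.q0, (VLabel.eps : VLabel Sig), B.q0))).toFinset
        ∪ parts.foldr (fun B s => B.δ ∪ s) (∅ : Finset (ℕ × VLabel Sig × ℕ))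

def DisjFunctionalVA (A : VA Sig) : Prop := ∃ parts, DisjFunctionalVAWith A parts

/-! ### 3CNF formulas -/

/-- A 3CNF clause over `n` Boolean variables: a triple of literals; `(i, true)` is `xᵢ`,
`(i, false)` is `¬xᵢ`. -/
def Clause3 (n : ℕ) : Type := (Fin n × Bool) × (Fin n × Bool) × (Fin n × Bool)

def litsOf {n : ℕ} (c : Clause3 n) : List (Fin n × Bool) := [c.1, c.2.1, c.2.2]

def clauseSat {n : ℕ} (τ : Fin n → Bool) (c : Clause3 n) : Prop :=
  ∃ l ∈ litsOf c, τ l.1 = l.2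

def Sat3 {n m : ℕ} (φ : Fin m → Clause3 n) : Prop :=
  ∃ τ : Fin n → Bool, ∀ j, clauseSat τ (φ j)

end Spanners

namespace Spanners

variable {Sig : Type} [Fintype Sig] [DecidableEq Sig]

/-- The chain automaton `An`: states `q_i = 3i`, `r_{i+1} = 3i+1`, `s_{i+1} = 3i+2`,
variables `x_{i+1} = 2i`, `y_{i+1} = 2i+1`; `q_n = 3n` is the unique accepting state. -/
def chainVA (Sig : Type) [Fintype Sig] [DecidableEq Sig] (n : ℕ) : VA Sig where
  q0 := 0
  F := {3 * n}
  δ := (Finset.range n).biUnion fun i =>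
    (({(3 * i, VLabel.openv (2 * i), 3 * i + 1),
       (3 * i, VLabel.openv (2 * i + 1), 3 * i + 2),
       (3 * i + 1, VLabel.closev (2 * i), 3 * (i + 1)),
       (3 * i + 2, VLabel.closev (2 * i + 1), 3 * (i + 1))} : Finset (ℕ × VLabel Sig × ℕ))
     ∪ (Finset.univ : Finset Sig).image (fun σ => (3 * i + 1, VLabel.letter σ, 3 * i + 1))
     ∪ (Finset.univ : Finset Sig).image (fun σ => (3 * i + 2, VLabel.letter σ, 3 * i + 2)))

end Spanners

/-! On the empty document, `A_n` extracts, for each `c : Fin n → Bool`, the mapping that sends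
one variable of each pair `x_{i+1}, y_{i+1}` (chosen by `c i`) to `[1,1⟩`: these are `2^n`
mappings with pairwise distinct domains. In a disjunctive functional VA an accepting run stays,
after its first `ε`-step, inside one functional component, and every mapping produced by a
functional component has the component's variable set as its domain. Hence the `2^n` mappings
come from `2^n` distinct components, whose initial states are distinct states of the VA.

Sequentiality of `A_n` holds because its accepting runs are concatenations of blocks
`v⊢ w ⊣v` with `v ∈ {x_k, y_k}` for `k = 1, …, n` in this order. -/

namespace Spanners

variable {Sig : Type}

section General

variable [DecidableEq Sig]

namespace VA

variable {A : VA Sig}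

lemma q0_mem_statesOf : A.q0 ∈ statesOf A := Finset.mem_insert_self _ _

lemma mem_statesOf_of_mem_F {q : ℕ} (h : q ∈ A.F) : q ∈ statesOf A := by
  simp [statesOf, h]

lemma src_mem_statesOf {p q : ℕ} {l : VLabel Sig} (h : (p, l, q) ∈ A.δ) :
    p ∈ statesOf A := by
  simp only [statesOf, Finset.mem_insert, Finset.mem_union, Finset.mem_image]
  exact Or.inr (Or.inl (Or.inr ⟨_, h, rfl⟩))

lemma tgt_mem_statesOf {p q : ℕ} {l : VLabel Sig} (h : (p, l, q) ∈ A.δ) :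
    q ∈ statesOf A := by
  simp only [statesOf, Finset.mem_insert, Finset.mem_union, Finset.mem_image]
  exact Or.inr (Or.inr ⟨_, h, rfl⟩)

lemma pathFrom_nil_iff {p r : ℕ} : A.PathFrom p [] r ↔ p = r :=
  ⟨fun h => by cases h; rfl, fun h => h ▸ .nil p⟩

lemma pathFrom_cons_iff {p r : ℕ} {l : VLabel Sig} {ls : List (VLabel Sig)} :
    A.PathFrom p (l :: ls) r ↔ ∃ q, (p, l, q) ∈ A.δ ∧ A.PathFrom q ls r :=
  ⟨fun h => by cases h with | cons ht htail => exact ⟨_, ht, htail⟩,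
    fun ⟨_, ht, htail⟩ => .cons ht htail⟩

lemma PathFrom.append {p q r : ℕ} {ls₁ ls₂ : List (VLabel Sig)} (h₁ : A.PathFrom p ls₁ q)
    (h₂ : A.PathFrom q ls₂ r) : A.PathFrom p (ls₁ ++ ls₂) r := by
  induction h₁ with
  | nil => exact h₂
  | cons h _ ih => exact .cons h (ih h₂)

lemma PathFrom.exists_mem_δ {p r : ℕ} {ls : List (VLabel Sig)} (h : A.PathFrom p ls r)
    {l : VLabel Sig} (hl : l ∈ ls) : ∃ p' q', (p', l, q') ∈ A.δ := by
  induction h with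
  | nil => simp at hl
  | cons h _ ih =>
    rcases List.mem_cons.1 hl with rfl | hl
    · exact ⟨_, _, h⟩
    · exact ih hl

end VA

lemma mapDom_runMapping (ls : List (VLabel Sig)) :
    mapDom (runMapping ls) = {x | VLabel.openv x ∈ ls} := by
  ext x
  by_cases hx : VLabel.openv x ∈ ls <;> simp [mapDom, runMapping, hx]

lemma FunctionalVA.mapDom_runMapping {B : VA Sig} (hB : FunctionalVA B) {ls : List (VLabel Sig)}
    (h : AcceptsWith B ls) : mapDom (runMapping ls) = varsOf B := by
  ext x
  rw [Spanners.mapDom_runMapping, Set.mem_ofPred, Finset.mem_coe]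
  refine ⟨fun hx => ?_, fun hx => (hB.2 ls h x hx).1⟩
  obtain ⟨qf, hpath, -⟩ := h
  obtain ⟨p, q, ht⟩ := hpath.exists_mem_δ hx
  exact Finset.mem_biUnion.2 ⟨_, ht, by simp [labelVars]⟩

lemma mem_foldr_union_iff {α β : Type*} [DecidableEq β] (g : α → Finset β) (l : List α)
    (b : β) :
    b ∈ l.foldr (fun a s => g a ∪ s) ∅ ↔ ∃ a ∈ l, b ∈ g a := by
  induction l with
  | nil => simp
  | cons a l ih => simp [ih]

namespace DisjFunctionalVAWith

variable {A : VA Sig} {parts : List (VA Sig)}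

lemma eq_of_mem_statesOf (hA : DisjFunctionalVAWith A parts) {B C : VA Sig} (hB : B ∈ parts)
    (hC : C ∈ parts) {q : ℕ} (hqB : q ∈ statesOf B) (hqC : q ∈ statesOf C) : B = C := by
  have : Std.Symm fun B C : VA Sig => Disjoint (statesOf B) (statesOf C) :=
    ⟨fun _ _ h => h.symm⟩
  by_contra hne
  exact Finset.disjoint_left.1 (hA.2.1.forall hB hC hne) hqB hqC

lemma mem_F_iff (hA : DisjFunctionalVAWith A parts) {q : ℕ} :
    q ∈ A.F ↔ ∃ B ∈ parts, q ∈ B.F := by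
  rw [hA.2.2.2.1, mem_foldr_union_iff]

lemma mem_δ_iff (hA : DisjFunctionalVAWith A parts) {t : ℕ × VLabel Sig × ℕ} :
    t ∈ A.δ ↔ (∃ B ∈ parts, t = (A.q0, .eps, B.q0)) ∨ ∃ B ∈ parts, t ∈ B.δ := by
  rw [hA.2.2.2.2, Finset.mem_union, List.mem_toFinset, List.mem_map, mem_foldr_union_iff]
  simp only [eq_comm]

lemma pathFrom_of_mem_statesOf (hA : DisjFunctionalVAWith A parts) {B : VA Sig}
    (hB : B ∈ parts) {p r : ℕ} {ls : List (VLabel Sig)} (h : A.PathFrom p ls r)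
    (hp : p ∈ statesOf B) :
    B.PathFrom p ls r ∧ r ∈ statesOf B := by
  induction h with
  | nil => exact ⟨.nil _, hp⟩
  | cons ht _ ih =>
    rcases hA.mem_δ_iff.1 ht with ⟨C, hC, he⟩ | ⟨C, hC, ht⟩
    · cases he
      exact absurd hp (hA.2.2.1 B hB)
    · obtain rfl := hA.eq_of_mem_statesOf hC hB (VA.src_mem_statesOf ht) hp
      obtain ⟨htail, hr⟩ := ih (VA.tgt_mem_statesOf ht)
      exact ⟨.cons ht htail, hr⟩

lemma exists_acceptsWith_part (hA : DisjFunctionalVAWith A parts) {ls : List (VLabel Sig)}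
    (h : AcceptsWith A ls) :
    ∃ B ∈ parts, ∃ ls', ls = .eps :: ls' ∧ AcceptsWith B ls' := by
  obtain ⟨qf, hpath, hqf⟩ := h
  obtain ⟨C, hC, hqfC⟩ := hA.mem_F_iff.1 hqf
  cases hpath with
  | nil => exact absurd (VA.mem_statesOf_of_mem_F hqfC) (hA.2.2.1 C hC)
  | cons ht htail =>
    rcases hA.mem_δ_iff.1 ht with ⟨B, hB, he⟩ | ⟨B, hB, ht⟩
    · simp only [Prod.mk.injEq, true_and] at he
      obtain ⟨rfl, rfl⟩ := he
      obtain ⟨hpathB, hqfB⟩ := hA.pathFrom_of_mem_statesOf hB htail VA.q0_mem_statesOf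
      obtain rfl := hA.eq_of_mem_statesOf hC hB (VA.mem_statesOf_of_mem_F hqfC) hqfB
      exact ⟨C, hC, _, rfl, qf, hpathB, hqfC⟩
    · exact absurd (VA.src_mem_statesOf ht) (hA.2.2.1 B hB)

lemma exists_mapDom_eq (hA : DisjFunctionalVAWith A parts) {d : List Sig} {μ : VMapping}
    (hμ : μ ∈ vaSem A d) :
    ∃ B ∈ parts, mapDom μ = varsOf B := by
  obtain ⟨ls, hacc, -, -, rfl⟩ := hμ
  obtain ⟨B, hB, ls', rfl, haccB⟩ := hA.exists_acceptsWith_part hacc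
  refine ⟨B, hB, ?_⟩
  rw [← (hA.1 B hB).mapDom_runMapping haccB, mapDom_runMapping, mapDom_runMapping]
  simp

end DisjFunctionalVAWith

theorem DisjFunctionalVA.card_le_card_statesOf {A : VA Sig} (hA : DisjFunctionalVA A)
    {ι : Type*} [Fintype ι] {d : ι → List Sig} {μ : ι → VMapping}
    (hμ : ∀ i, μ i ∈ vaSem A (d i)) (hinj : Function.Injective fun i => mapDom (μ i)) :
    Fintype.card ι ≤ (statesOf A).card := by
  obtain ⟨parts, hA⟩ := hA
  choose B hB hdom using fun i => hA.exists_mapDom_eq (hμ i)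
  refine Finset.card_le_card_of_injOn (fun i => (B i).q0) (fun i _ => ?_) fun i _ j _ hij => ?_
  · exact VA.tgt_mem_statesOf (hA.mem_δ_iff.2 (Or.inl ⟨B i, hB i, rfl⟩))
  · have hq0 : (B i).q0 ∈ statesOf (B j) :=
      (show (B i).q0 = (B j).q0 from hij) ▸ VA.q0_mem_statesOf
    have hBij : B i = B j := hA.eq_of_mem_statesOf (hB i) (hB j) VA.q0_mem_statesOf hq0
    exact hinj (by simp only [hdom, hBij])

end General

lemma posAt_mono (ls : List (VLabel Sig)) {i j : ℕ} (hij : i ≤ j) :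
    posAt ls i ≤ posAt ls j :=
  Nat.add_le_add_left (List.take_sublist_take_left hij).countP_le 1

/-- The labels read between `q_k` and `q_{k+1}` when passing through `r_{k+1}` (`v = 2k`) or
`s_{k+1}` (`v = 2k + 1`). -/
def chainBlock (v : ℕ) (w : List Sig) : List (VLabel Sig) :=
  .openv v :: (w.map .letter ++ [.closev v])

@[simp]
lemma openv_mem_chainBlock {v x : ℕ} {w : List Sig} :
    .openv x ∈ chainBlock v w ↔ x = v := by
  simp [chainBlock]

@[simp]
lemma closev_mem_chainBlock {v x : ℕ} {w : List Sig} :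
    .closev x ∈ chainBlock v w ↔ x = v := by
  simp [chainBlock]

lemma eq_zero_of_chainBlock_getElem? {v x i : ℕ} {w : List Sig}
    (h : (chainBlock v w)[i]? = some (.openv x)) : i = 0 := by
  cases i with
  | zero => rfl
  | succ i => simpa [chainBlock] using List.mem_of_getElem? (l := w.map VLabel.letter ++ _) h

lemma count_openv_chainBlock [DecidableEq Sig] {v x : ℕ} {w : List Sig} :
    (chainBlock v w).count (.openv x) = if v = x then 1 else 0 := by
  have : (w.map VLabel.letter).count (.openv x) = 0 := List.count_eq_zero.2 (by simp)
  simp [chainBlock, List.count_cons, this]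

lemma count_closev_chainBlock [DecidableEq Sig] {v x : ℕ} {w : List Sig} :
    (chainBlock v w).count (.closev x) = if v = x then 1 else 0 := by
  have : (w.map VLabel.letter).count (.closev x) = 0 := List.count_eq_zero.2 (by simp)
  simp [chainBlock, List.count_cons, this]

/-- The runs of `chainVA` from `q_k` to `q_n`, block by block. -/
inductive ChainRun (n : ℕ) : ℕ → List (VLabel Sig) → Prop
  | nil : ChainRun n n []
  | block {k v : ℕ} {w : List Sig} {rest : List (VLabel Sig)} (hk : k < n) (hv : v / 2 = k)
      (h : ChainRun n (k + 1) rest) : ChainRun n k (chainBlock v w ++ rest)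

namespace ChainRun

variable {n k : ℕ} {ls : List (VLabel Sig)}

lemma le_of_openv_mem (h : ChainRun n k ls) {x : ℕ} (hx : .openv x ∈ ls) : k ≤ x / 2 := by
  induction h with
  | nil => simp at hx
  | block _ hv _ ih =>
    rcases List.mem_append.1 hx with hx | hx
    · rw [openv_mem_chainBlock.1 hx, hv]
    · exact (ih hx).trans' (Nat.le_succ _)

lemma le_of_closev_mem (h : ChainRun n k ls) {x : ℕ} (hx : .closev x ∈ ls) : k ≤ x / 2 := by
  induction h with
  | nil => simp at hx
  | block _ hv _ ih =>
    rcases List.mem_append.1 hx with hx | hx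
    · rw [closev_mem_chainBlock.1 hx, hv]
    · exact (ih hx).trans' (Nat.le_succ _)

lemma openv_mem_iff_closev_mem (h : ChainRun n k ls) {x : ℕ} :
    .openv x ∈ ls ↔ .closev x ∈ ls := by
  induction h with
  | nil => simp
  | block _ _ _ ih => simp [ih]

lemma index_le (h : ChainRun n k ls) {x i j : ℕ} (hi : ls[i]? = some (.openv x))
    (hj : ls[j]? = some (.closev x)) : i ≤ j := by
  induction h generalizing i j with
  | nil => simp at hi
  | @block k v w rest _ hv h ih =>
    rw [List.getElem?_append] at hi hj
    split_ifs at hi with hiB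
    · exact (eq_zero_of_chainBlock_getElem? hi).trans_le (Nat.zero_le j)
    · have hxv : k + 1 ≤ x / 2 := h.le_of_openv_mem (List.mem_of_getElem? hi)
      split_ifs at hj with hjB
      · have := closev_mem_chainBlock.1 (List.mem_of_getElem? hj)
        omega
      · have := ih hi hj
        omega

variable [DecidableEq Sig]

lemma count_openv_le_one (h : ChainRun n k ls) (x : ℕ) : ls.count (.openv x) ≤ 1 := by
  induction h with
  | nil => simp
  | @block k v w rest _ hv h ih =>
    rw [List.count_append, count_openv_chainBlock]
    split_ifs with hx
    · have : rest.count (.openv x) = 0 :=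
        List.count_eq_zero.2 fun hmem => by have := h.le_of_openv_mem hmem; omega
      omega
    · omega

lemma count_closev_le_one (h : ChainRun n k ls) (x : ℕ) : ls.count (.closev x) ≤ 1 := by
  induction h with
  | nil => simp
  | @block k v w rest _ hv h ih =>
    rw [List.count_append, count_closev_chainBlock]
    split_ifs with hx
    · have : rest.count (.closev x) = 0 :=
        List.count_eq_zero.2 fun hmem => by have := h.le_of_closev_mem hmem; omega
      omega
    · omega

lemma validLabels (h : ChainRun n k ls) : ValidLabels ls := fun x =>
  ⟨h.count_openv_le_one x, h.count_closev_le_one x, h.openv_mem_iff_closev_mem,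
    fun _ _ hi hj => posAt_mono ls (h.index_le hi hj)⟩

end ChainRun

def choiceRun {m : ℕ} (f : Fin m → ℕ) : List (VLabel Sig) :=
  (List.ofFn fun i => chainBlock (f i) []).flatten

lemma chainRun_choiceRun {n : ℕ} :
    ∀ {m k : ℕ} (f : Fin m → ℕ), k + m = n → (∀ i, f i / 2 = k + i) →
      ChainRun n k (choiceRun (Sig := Sig) f)
  | 0, k, _, hkn, _ => by
    rw [← hkn]
    exact .nil
  | m + 1, k, f, hkn, hf => by
    rw [choiceRun, List.ofFn_succ, List.flatten_cons]
    exact .block (by omega) (hf 0)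
      (chainRun_choiceRun (fun i => f i.succ) (by omega) fun i => by
        rw [hf, Fin.val_succ]
        omega)

lemma mapDom_runMapping_choiceRun [DecidableEq Sig] {m : ℕ} (f : Fin m → ℕ) :
    mapDom (runMapping (choiceRun (Sig := Sig) f)) = Set.range f := by
  ext x
  simp [mapDom_runMapping, choiceRun, eq_comm]

lemma readWord_choiceRun {m : ℕ} (f : Fin m → ℕ) :
    readWord (choiceRun (Sig := Sig) f) = [] := by
  simp [readWord, choiceRun, chainBlock]

/-- The variable `x_{i+1}` (`= 2i`) or `y_{i+1}` (`= 2i + 1`) selected by the bit `c i`. -/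
def bitChoice {m : ℕ} (c : Fin m → Bool) (i : Fin m) : ℕ := 2 * i + (c i).toNat

lemma bitChoice_div_two {m : ℕ} (c : Fin m → Bool) (i : Fin m) : bitChoice c i / 2 = i := by
  have := Bool.toNat_le (c i)
  unfold bitChoice
  omega

lemma range_bitChoice_injective {m : ℕ} :
    Function.Injective fun c : Fin m → Bool => Set.range (bitChoice c) := by
  intro c c' (h : Set.range (bitChoice c) = Set.range (bitChoice c'))
  funext i
  obtain ⟨j, hj⟩ : bitChoice c i ∈ Set.range (bitChoice c') := h ▸ Set.mem_range_self i
  obtain rfl : j = i := Fin.ext (by rw [← bitChoice_div_two c' j, hj, bitChoice_div_two])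
  have : (c j).toNat = (c' j).toNat := by simpa [bitChoice] using hj.symm
  revert this
  cases c j <;> cases c' j <;> decide

section ChainVA

variable [Fintype Sig] [DecidableEq Sig] {n : ℕ}

lemma mem_chainVA_δ {p q : ℕ} {l : VLabel Sig} :
    (p, l, q) ∈ (chainVA Sig n).δ ↔ ∃ i < n,
      (p = 3 * i ∧ l = .openv (2 * i) ∧ q = 3 * i + 1) ∨
      (p = 3 * i ∧ l = .openv (2 * i + 1) ∧ q = 3 * i + 2) ∨
      (p = 3 * i + 1 ∧ l = .closev (2 * i) ∧ q = 3 * i + 3) ∨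
      (p = 3 * i + 2 ∧ l = .closev (2 * i + 1) ∧ q = 3 * i + 3) ∨
      (∃ σ : Sig, p = 3 * i + 1 ∧ l = .letter σ ∧ q = 3 * i + 1) ∨
      (∃ σ : Sig, p = 3 * i + 2 ∧ l = .letter σ ∧ q = 3 * i + 2) := by
  simp only [chainVA, Finset.mem_biUnion, Finset.mem_range, Finset.mem_union,
    Finset.mem_insert, Finset.mem_singleton, Finset.mem_image, Finset.mem_univ, true_and,
    Prod.mk.injEq]
  refine exists_congr fun i => and_congr_right fun _ => ?_
  constructor
  · rintro (((h | h | h | h) | ⟨σ, h⟩) | ⟨σ, h⟩) <;> grind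
  · rintro (h | h | h | h | ⟨σ, h⟩ | ⟨σ, h⟩) <;> grind

variable {k v : ℕ}

lemma openv_mem_chainVA_δ (hk : k < n) (hv : v / 2 = k) :
    (3 * k, .openv v, 3 * k + 1 + v % 2) ∈ (chainVA Sig n).δ := by
  refine mem_chainVA_δ.2 ⟨k, hk, ?_⟩
  obtain rfl | rfl : v = 2 * k ∨ v = 2 * k + 1 := by omega
  all_goals simp [Nat.add_mod]

lemma letter_mem_chainVA_δ (hk : k < n) (hv : v / 2 = k) (σ : Sig) :
    (3 * k + 1 + v % 2, .letter σ, 3 * k + 1 + v % 2) ∈ (chainVA Sig n).δ := by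
  refine mem_chainVA_δ.2 ⟨k, hk, ?_⟩
  obtain rfl | rfl : v = 2 * k ∨ v = 2 * k + 1 := by omega
  all_goals simp [Nat.add_mod]

lemma closev_mem_chainVA_δ (hk : k < n) (hv : v / 2 = k) :
    (3 * k + 1 + v % 2, .closev v, 3 * (k + 1)) ∈ (chainVA Sig n).δ := by
  refine mem_chainVA_δ.2 ⟨k, hk, ?_⟩
  obtain rfl | rfl : v = 2 * k ∨ v = 2 * k + 1 := by omega
  all_goals simp [Nat.add_mod, mul_add]

lemma lt_of_mem_chainVA_δ {p q : ℕ} {l : VLabel Sig} (h : (p, l, q) ∈ (chainVA Sig n).δ) :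
    p < 3 * n := by
  obtain ⟨i, hi, h⟩ := mem_chainVA_δ.1 h
  grind

lemma exists_openv_of_mem_chainVA_δ {l : VLabel Sig} {q : ℕ}
    (h : (3 * k, l, q) ∈ (chainVA Sig n).δ) :
    ∃ v, v / 2 = k ∧ l = .openv v ∧ q = 3 * k + 1 + v % 2 := by
  obtain ⟨i, hi, h⟩ := mem_chainVA_δ.1 h
  grind

lemma letter_or_closev_of_mem_chainVA_δ (hv : v / 2 = k) {l : VLabel Sig} {q : ℕ}
    (h : (3 * k + 1 + v % 2, l, q) ∈ (chainVA Sig n).δ) :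
    (∃ σ, l = .letter σ ∧ q = 3 * k + 1 + v % 2) ∨ (l = .closev v ∧ q = 3 * (k + 1)) := by
  obtain ⟨i, hi, h⟩ := mem_chainVA_δ.1 h
  grind

lemma statesOf_chainVA : statesOf (chainVA Sig n) = Finset.range (3 * n + 1) := by
  ext q
  simp only [statesOf, Finset.mem_insert, Finset.mem_union, Finset.mem_image, Finset.mem_range]
  constructor
  · rintro (rfl | (hq | ⟨⟨p, l, r⟩, ht, rfl⟩) | ⟨⟨p, l, r⟩, ht, rfl⟩)
    · exact Nat.succ_pos _
    · rw [Finset.mem_singleton.1 hq]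
      exact Nat.lt_succ_self _
    · exact (lt_of_mem_chainVA_δ ht).trans (Nat.lt_succ_self _)
    · obtain ⟨i, hi, h⟩ := mem_chainVA_δ.1 ht
      grind
  · intro hq
    rcases Nat.eq_zero_or_pos q with rfl | hq0
    · exact Or.inl rfl
    refine Or.inr (Or.inr ?_)
    by_cases h2 : (q - 1) % 3 = 2
    · refine ⟨_, closev_mem_chainVA_δ (k := (q - 1) / 3) (v := 2 * ((q - 1) / 3))
        (by omega) (by omega), ?_⟩
      dsimp only
      omega
    · refine ⟨_, openv_mem_chainVA_δ (k := (q - 1) / 3)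
        (v := 2 * ((q - 1) / 3) + (q - 1) % 3) (by omega) (by omega), ?_⟩
      dsimp only
      omega

lemma pathFrom_letters_chainVA (hk : k < n) (hv : v / 2 = k) (w : List Sig) :
    (chainVA Sig n).PathFrom (3 * k + 1 + v % 2) (w.map .letter) (3 * k + 1 + v % 2) := by
  induction w with
  | nil => exact .nil _
  | cons σ w ih => exact .cons (letter_mem_chainVA_δ hk hv σ) ih

lemma ChainRun.pathFrom_chainVA {ls : List (VLabel Sig)} (h : ChainRun n k ls) :
    (chainVA Sig n).PathFrom (3 * k) ls (3 * n) := by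
  induction h with
  | nil => exact .nil _
  | block hk hv _ ih =>
    simp only [chainBlock, List.cons_append, List.append_assoc]
    exact .cons (openv_mem_chainVA_δ hk hv)
      ((pathFrom_letters_chainVA hk hv _).append (.cons (closev_mem_chainVA_δ hk hv) ih))

lemma exists_closev_of_pathFrom_chainVA (hv : v / 2 = k) {ls : List (VLabel Sig)}
    (h : (chainVA Sig n).PathFrom (3 * k + 1 + v % 2) ls (3 * n)) :
    ∃ (w : List Sig) (rest : List (VLabel Sig)), ls = w.map .letter ++ .closev v :: rest ∧
      (chainVA Sig n).PathFrom (3 * (k + 1)) rest (3 * n) := by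
  induction ls with
  | nil => have := VA.pathFrom_nil_iff.1 h; omega
  | cons l ls ih =>
    obtain ⟨q, ht, htail⟩ := VA.pathFrom_cons_iff.1 h
    rcases letter_or_closev_of_mem_chainVA_δ hv ht with ⟨σ, rfl, rfl⟩ | ⟨rfl, rfl⟩
    · obtain ⟨w, rest, rfl, hrest⟩ := ih htail
      exact ⟨σ :: w, rest, rfl, hrest⟩
    · exact ⟨[], ls, rfl, htail⟩

lemma ChainRun.of_pathFrom_chainVA {m : ℕ} :
    ∀ {k} {ls : List (VLabel Sig)}, k + m = n → (chainVA Sig n).PathFrom (3 * k) ls (3 * n) →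
      ChainRun n k ls := by
  induction m with
  | zero =>
    rintro k (_ | ⟨l, ls⟩) hkn h
    · exact hkn ▸ .nil
    · obtain ⟨q, ht, -⟩ := VA.pathFrom_cons_iff.1 h
      have := lt_of_mem_chainVA_δ ht
      omega
  | succ m ih =>
    rintro k (_ | ⟨l, ls⟩) hkn h
    · have := VA.pathFrom_nil_iff.1 h
      omega
    · obtain ⟨q, ht, htail⟩ := VA.pathFrom_cons_iff.1 h
      obtain ⟨v, hv, rfl, rfl⟩ := exists_openv_of_mem_chainVA_δ ht
      obtain ⟨w, rest, rfl, hrest⟩ := exists_closev_of_pathFrom_chainVA hv htail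
      have hblock : VLabel.openv v :: (w.map .letter ++ .closev v :: rest) =
          chainBlock v w ++ rest := by
        simp [chainBlock]
      exact hblock ▸ .block (by omega) hv (ih (by omega) hrest)

theorem chainVA_sequential : (chainVA Sig n).Sequential := by
  rintro ls ⟨qf, hpath, hqf⟩
  obtain rfl : qf = 3 * n := Finset.mem_singleton.1 hqf
  exact (ChainRun.of_pathFrom_chainVA (m := n) (k := 0) (by omega) hpath).validLabels

lemma ChainRun.runMapping_mem_vaSem {ls : List (VLabel Sig)} (h : ChainRun n 0 ls) :
    runMapping ls ∈ vaSem (chainVA Sig n) (readWord ls) :=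
  ⟨ls, ⟨3 * n, h.pathFrom_chainVA, Finset.mem_singleton_self _⟩, rfl, h.validLabels, rfl⟩

theorem statement10_general (n : ℕ) :
    (chainVA Sig n).Sequential ∧ (statesOf (chainVA Sig n)).card = 3 * n + 1 ∧
    ∀ A' : VA Sig, DisjFunctionalVA A' →
      (∀ d : List Sig, vaSem A' d = vaSem (chainVA Sig n) d) →
      2 ^ n ≤ (statesOf A').card := by
  refine ⟨chainVA_sequential, by simp [statesOf_chainVA], fun A' hA' hsem => ?_⟩
  have hrun (c : Fin n → Bool) : ChainRun n 0 (choiceRun (Sig := Sig) (bitChoice c)) :=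
    chainRun_choiceRun _ (Nat.zero_add n) fun i => by rw [bitChoice_div_two, Nat.zero_add]
  have hmem (c : Fin n → Bool) :
      runMapping (choiceRun (Sig := Sig) (bitChoice c)) ∈ vaSem A' [] := by
    rw [hsem, ← readWord_choiceRun (bitChoice c)]
    exact (hrun c).runMapping_mem_vaSem
  have hcard := hA'.card_le_card_statesOf hmem (by
    simpa only [mapDom_runMapping_choiceRun] using range_bitChoice_injective)
  simpa using hcard

theorem statement10 (n : ℕ) (hn : 1 ≤ n) :
    (chainVA Sig n).Sequential ∧ (statesOf (chainVA Sig n)).card = 3 * n + 1 ∧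
    ∀ A' : VA Sig, DisjFunctionalVA A' →
      (∀ d : List Sig, vaSem A' d = vaSem (chainVA Sig n) d) →
      2 ^ n ≤ (statesOf A').card :=
  statement10_general n

end ChainVA

end Spanners
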